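/- Deterministic CMI continuity bound (core inequality in the proof of the Total Error Bound): let A be a finite type with exactly two elements, B and C finite types, and p, q probability mass functions on A × B × C whose total variation distance satisfies δ(p,q) ≤ δ₀ for some δ₀ ∈ [0,1]. Define I_p = H_p(A | C) − H_p(A | B × C) and I_q = H_q(A | C) − H_q(A | B × C). Then |I_p − I_q| ≤ 2·δ₀·log 2 + 2·(1+δ₀)·h_b(δ₀/(1+δ₀)). -/

import Mathlib

open Finset

/-- Shannon entropy (in nats) of a probability mass function on a finite type,
with the convention `0 · log 0 = 0` (which holds since `Real.log 0 = 0`). -/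
noncomputable def entropy {S : Type*} [Fintype S] (p : S → ℝ) : ℝ :=
  ∑ x, -(p x * Real.log (p x))

/-- Conditional Shannon entropy `H_p(A | B)` of a pmf `p` on a product
`A × B`: `∑_b p_B(b) · H(p_{A|B=b})`, where terms with `p_B(b) = 0`
contribute `0` (the factor `p_B(b)` vanishes). -/
noncomputable def condEntropy {A B : Type*} [Fintype A] [Fintype B]
    (p : A × B → ℝ) : ℝ :=
  ∑ b, (∑ a, p (a, b)) * entropy (fun a => p (a, b) / ∑ a', p (a', b))

/-- Conditional mutual information `I_p(A; B | C)` of a pmf `p` on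
`A × B × C`, defined as `H_p(A | C) − H_p(A | B × C)`. -/
noncomputable def cmi {A B C : Type*} [Fintype A] [Fintype B] [Fintype C]
    (p : A × B × C → ℝ) : ℝ :=
  condEntropy (fun ac : A × C => ∑ b, p (ac.1, b, ac.2)) -
    condEntropy (fun abc : A × (B × C) => p (abc.1, abc.2.1, abc.2.2))

/-- Kullback–Leibler divergence (in nats) between two pmfs on a finite type,
with the convention that terms with `p x = 0` contribute `0`. -/
noncomputable def klDiv {S : Type*} [Fintype S] (p q : S → ℝ) : ℝ :=
  ∑ x, p x * Real.log (p x / q x)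

/-- Total variation distance between two pmfs on a finite type. -/
noncomputable def tvDist {S : Type*} [Fintype S] (p q : S → ℝ) : ℝ :=
  (1 / 2) * ∑ x, |p x - q x|

/-- Binary entropy function (in nats), `h_b(x) = −x log x − (1−x) log(1−x)`,
with `h_b(0) = h_b(1) = 0` (automatic since `Real.log 0 = 0`). -/
noncomputable def binEntropy (x : ℝ) : ℝ :=
  -(x * Real.log x) - (1 - x) * Real.log (1 - x)

/-!
Alicki–Fannes–Winter argument. Splitting `p − q` into its positive and negative parts and padding
both by a multiple of `p` gives `p + s = q + r` with `r, s ≥ 0` of mass `δ₀`. Extended to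
unnormalised weights, `H(A | Y)` is superadditive, and subadditive up to the mixing entropy of the
two total masses; fibre by fibre, both reduce to `∑ᵢ mixEntropy uᵢ vᵢ ≤ mixEntropy (∑ u) (∑ v)`,
the two-point log-sum inequality iterated. Hence
`H_p + H_s ≤ H_{p+s} = H_{q+r} ≤ H_q + H_r + mixEntropy 1 δ₀`, and with `0 ≤ H_s`,
`H_r ≤ δ₀ log |A|` this bounds `|H_p(A | Y) − H_q(A | Y)|` by
`δ₀ log |A| + (1 + δ₀) h_b(δ₀ / (1 + δ₀))`. Apply it with `Y = C` to the marginals and with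
`Y = B × C`.
-/

open Real (negMulLog negMulLog_mul concaveOn_negMulLog)

/-- The entropy of the label of a mixture of masses `a` and `b`. -/
noncomputable def mixEntropy (a b : ℝ) : ℝ :=
  negMulLog a + negMulLog b - negMulLog (a + b)

lemma negMulLog_eq_mul_negMulLog_div (x : ℝ) {c : ℝ} (hc : c ≠ 0) :
    negMulLog x = c * negMulLog (x / c) + x / c * negMulLog c := by
  rw [← negMulLog_mul, div_mul_cancel₀ x hc]

lemma negMulLog_add_le {x y : ℝ} (hx : 0 ≤ x) (hy : 0 ≤ y) :
    negMulLog (x + y) ≤ negMulLog x + negMulLog y := by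
  have mul_log_le : ∀ {a b : ℝ}, 0 ≤ a → 0 ≤ b → a * Real.log a ≤ a * Real.log (a + b) := by
    intro a b ha hb
    rcases ha.eq_or_lt with rfl | ha
    · simp
    · exact mul_le_mul_of_nonneg_left (Real.log_le_log ha (by linarith)) ha.le
  have h₁ := mul_log_le hx hy
  have h₂ := mul_log_le hy hx
  simp only [negMulLog, neg_mul, add_comm y x] at h₂ ⊢
  nlinarith

lemma negMulLog_sum_le {ι : Type*} (s : Finset ι) {v : ι → ℝ} (hv : ∀ i ∈ s, 0 ≤ v i) :
    negMulLog (∑ i ∈ s, v i) ≤ ∑ i ∈ s, negMulLog (v i) :=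
  le_sum_of_subadditive_on_pred negMulLog (0 ≤ ·) (by simp) (fun _ _ => negMulLog_add_le)
    (fun _ _ => add_nonneg) v hv

lemma mul_negMulLog_div_add_le {x y c d : ℝ} (hx : 0 ≤ x) (hy : 0 ≤ y) (hc : 0 < c)
    (hd : 0 < d) :
    c * negMulLog (x / c) + d * negMulLog (y / d) ≤ (c + d) * negMulLog ((x + y) / (c + d)) := by
  have hcd : 0 < c + d := add_pos hc hd
  have jensen := concaveOn_negMulLog.2 (Set.mem_Ici.2 (div_nonneg hx hc.le))
    (Set.mem_Ici.2 (div_nonneg hy hd.le)) (div_nonneg hc.le hcd.le) (div_nonneg hd.le hcd.le)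
    (by field_simp)
  have hmean : c / (c + d) * (x / c) + d / (c + d) * (y / d) = (x + y) / (c + d) := by
    field_simp
  simp only [smul_eq_mul, hmean] at jensen
  calc c * negMulLog (x / c) + d * negMulLog (y / d)
      = (c + d) * (c / (c + d) * negMulLog (x / c) + d / (c + d) * negMulLog (y / d)) := by
        field_simp
    _ ≤ (c + d) * negMulLog ((x + y) / (c + d)) := by gcongr

section mixEntropy

variable {a b a' b' : ℝ}

lemma mixEntropy_nonneg (ha : 0 ≤ a) (hb : 0 ≤ b) : 0 ≤ mixEntropy a b :=
  sub_nonneg.2 (negMulLog_add_le ha hb)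

lemma mixEntropy_eq_mul (h : a + b ≠ 0) :
    mixEntropy a b = (a + b) * negMulLog (a / (a + b)) + (a + b) * negMulLog (b / (a + b)) := by
  have hsum : a / (a + b) + b / (a + b) = 1 := by field_simp
  rw [mixEntropy]
  linear_combination negMulLog_eq_mul_negMulLog_div a h + negMulLog_eq_mul_negMulLog_div b h +
    negMulLog (a + b) * hsum

lemma mixEntropy_eq_mul_binEntropy (h : a + b ≠ 0) :
    mixEntropy a b = (a + b) * binEntropy (b / (a + b)) := by
  have hcompl : 1 - b / (a + b) = a / (a + b) := by field_simp; ring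
  rw [mixEntropy_eq_mul h, binEntropy, hcompl]
  simp only [negMulLog]
  ring

lemma mixEntropy_add_le (ha : 0 ≤ a) (hb : 0 ≤ b) (ha' : 0 ≤ a') (hb' : 0 ≤ b') :
    mixEntropy a b + mixEntropy a' b' ≤ mixEntropy (a + a') (b + b') := by
  rcases (add_nonneg ha hb).eq_or_lt with h | h
  · obtain ⟨rfl, rfl⟩ : a = 0 ∧ b = 0 := ⟨by linarith, by linarith⟩
    simp [mixEntropy]
  rcases (add_nonneg ha' hb').eq_or_lt with h' | h'
  · obtain ⟨rfl, rfl⟩ : a' = 0 ∧ b' = 0 := ⟨by linarith, by linarith⟩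
    simp [mixEntropy]
  rw [mixEntropy_eq_mul h.ne', mixEntropy_eq_mul h'.ne', mixEntropy_eq_mul (by linarith),
    show a + a' + (b + b') = a + b + (a' + b') by ring]
  linarith [mul_negMulLog_div_add_le ha ha' h h', mul_negMulLog_div_add_le hb hb' h h']

lemma sum_mixEntropy_le {ι : Type*} (s : Finset ι) {u v : ι → ℝ} (hu : ∀ i ∈ s, 0 ≤ u i)
    (hv : ∀ i ∈ s, 0 ≤ v i) :
    ∑ i ∈ s, mixEntropy (u i) (v i) ≤ mixEntropy (∑ i ∈ s, u i) (∑ i ∈ s, v i) := by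
  induction s using Finset.cons_induction with
  | empty => simp [mixEntropy]
  | cons i s _ ih =>
    simp only [mem_cons, forall_eq_or_imp] at hu hv
    rw [sum_cons, sum_cons, sum_cons]
    exact (add_le_add le_rfl (ih hu.2 hv.2)).trans (mixEntropy_add_le hu.1 hv.1
      (sum_nonneg hu.2) (sum_nonneg hv.2))

end mixEntropy

section entropy

variable {S : Type*} [Fintype S]

lemma entropy_eq_sum_negMulLog (v : S → ℝ) : entropy v = ∑ x, negMulLog (v x) := by
  simp [entropy, negMulLog]

lemma entropy_add (u v : S → ℝ) :
    entropy (fun x => u x + v x) = entropy u + entropy v - ∑ x, mixEntropy (u x) (v x) := by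
  simp only [entropy_eq_sum_negMulLog, mixEntropy, sum_sub_distrib, sum_add_distrib]
  ring

lemma entropy_le_negMulLog_sum_add {v : S → ℝ} (hv : ∀ x, 0 ≤ v x) :
    entropy v ≤ negMulLog (∑ x, v x) + (∑ x, v x) * Real.log (Fintype.card S) := by
  rcases isEmpty_or_nonempty S with hS | hS
  · simp [entropy]
  set n : ℝ := (Fintype.card S : ℝ)
  have hn : 0 < n := Nat.cast_pos.2 Fintype.card_pos
  have jensen := concaveOn_negMulLog.le_map_sum (t := univ) (w := fun _ => n⁻¹) (p := v)
    (fun _ _ => by positivity) (by simp [n, hn.ne']) (fun x _ => hv x)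
  have hinv : negMulLog n⁻¹ = n⁻¹ * Real.log n := by simp [Real.negMulLog, Real.log_inv]
  simp only [smul_eq_mul, ← mul_sum, negMulLog_mul, hinv] at jensen
  rw [entropy_eq_sum_negMulLog]
  calc ∑ x, negMulLog (v x) = n * (n⁻¹ * ∑ x, negMulLog (v x)) := by field_simp
    _ ≤ n * ((∑ x, v x) * (n⁻¹ * Real.log n) + n⁻¹ * negMulLog (∑ x, v x)) := by gcongr
    _ = negMulLog (∑ x, v x) + (∑ x, v x) * Real.log n := by field_simp; ring

lemma mul_entropy_div_sum {v : S → ℝ} (hv : ∀ x, 0 ≤ v x) :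
    (∑ x, v x) * entropy (fun x => v x / ∑ x', v x') = entropy v - negMulLog (∑ x, v x) := by
  rcases (sum_nonneg fun x _ => hv x).eq_or_lt with h | h
  · obtain rfl : v = 0 :=
      funext fun x => (sum_eq_zero_iff_of_nonneg fun x _ => hv x).1 h.symm x (mem_univ x)
    simp [entropy]
  · have hsplit := fun x => negMulLog_eq_mul_negMulLog_div (v x) h.ne'
    rw [entropy_eq_sum_negMulLog v, sum_congr rfl fun x _ => hsplit x, sum_add_distrib, ← sum_mul,
      ← sum_div, div_self h.ne', one_mul, entropy_eq_sum_negMulLog, mul_sum]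
    ring

end entropy

section condEntropy

variable {A Y : Type*} [Fintype A] [Fintype Y]

lemma condEntropy_eq_sum_entropy_sub {p : A × Y → ℝ} (hp : ∀ x, 0 ≤ p x) :
    condEntropy p = ∑ y, (entropy (fun a => p (a, y)) - negMulLog (∑ a, p (a, y))) :=
  sum_congr rfl fun y _ => mul_entropy_div_sum fun a => hp (a, y)

lemma condEntropy_nonneg {p : A × Y → ℝ} (hp : ∀ x, 0 ≤ p x) : 0 ≤ condEntropy p := by
  rw [condEntropy_eq_sum_entropy_sub hp]
  refine sum_nonneg fun y _ => sub_nonneg.2 ?_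
  rw [entropy_eq_sum_negMulLog]
  exact negMulLog_sum_le univ fun a _ => hp (a, y)

lemma condEntropy_le_mul_log_card {p : A × Y → ℝ} (hp : ∀ x, 0 ≤ p x) :
    condEntropy p ≤ (∑ x, p x) * Real.log (Fintype.card A) := by
  rw [condEntropy_eq_sum_entropy_sub hp, Fintype.sum_prod_type_right, sum_mul]
  exact sum_le_sum fun y _ => sub_le_iff_le_add'.2 (entropy_le_negMulLog_sum_add fun a => hp (a, y))

lemma condEntropy_add_condEntropy_le {u v : A × Y → ℝ} (hu : ∀ x, 0 ≤ u x) (hv : ∀ x, 0 ≤ v x) :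
    condEntropy u + condEntropy v ≤ condEntropy (u + v) := by
  rw [condEntropy_eq_sum_entropy_sub hu, condEntropy_eq_sum_entropy_sub hv,
    condEntropy_eq_sum_entropy_sub (p := u + v) fun x => add_nonneg (hu x) (hv x),
    ← sum_add_distrib]
  refine sum_le_sum fun y _ => ?_
  have hmix := sum_mixEntropy_le univ (fun a _ => hu (a, y)) (fun a _ => hv (a, y))
  have hsplit := entropy_add (fun a => u (a, y)) (fun a => v (a, y))
  simp only [Pi.add_apply, sum_add_distrib] at hsplit ⊢
  rw [hsplit]
  linarith [show mixEntropy (∑ a, u (a, y)) (∑ a, v (a, y)) =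
    negMulLog (∑ a, u (a, y)) + negMulLog (∑ a, v (a, y)) -
      negMulLog (∑ a, u (a, y) + ∑ a, v (a, y)) from rfl]

lemma condEntropy_add_le {u v : A × Y → ℝ} (hu : ∀ x, 0 ≤ u x) (hv : ∀ x, 0 ≤ v x) :
    condEntropy (u + v) ≤
      condEntropy u + condEntropy v + mixEntropy (∑ x, u x) (∑ x, v x) := by
  have hfiber : ∀ y, entropy (fun a => u (a, y) + v (a, y)) -
      negMulLog (∑ a, u (a, y) + ∑ a, v (a, y)) ≤
      (entropy (fun a => u (a, y)) - negMulLog (∑ a, u (a, y))) +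
        (entropy (fun a => v (a, y)) - negMulLog (∑ a, v (a, y))) +
        mixEntropy (∑ a, u (a, y)) (∑ a, v (a, y)) := fun y => by
    rw [entropy_add, mixEntropy]
    linarith [sum_nonneg fun a (_ : a ∈ univ) => mixEntropy_nonneg (hu (a, y)) (hv (a, y))]
  calc condEntropy (u + v)
      ≤ ∑ y, ((entropy (fun a => u (a, y)) - negMulLog (∑ a, u (a, y))) +
          (entropy (fun a => v (a, y)) - negMulLog (∑ a, v (a, y))) +
          mixEntropy (∑ a, u (a, y)) (∑ a, v (a, y))) := by
        rw [condEntropy_eq_sum_entropy_sub (p := u + v) fun x => add_nonneg (hu x) (hv x)]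
        simpa only [Pi.add_apply, sum_add_distrib] using sum_le_sum fun y _ => hfiber y
    _ ≤ condEntropy u + condEntropy v +
          mixEntropy (∑ y, ∑ a, u (a, y)) (∑ y, ∑ a, v (a, y)) := by
        rw [condEntropy_eq_sum_entropy_sub hu, condEntropy_eq_sum_entropy_sub hv,
          sum_add_distrib, sum_add_distrib]
        gcongr
        exact sum_mixEntropy_le univ (fun y _ => sum_nonneg fun a _ => hu (a, y))
          fun y _ => sum_nonneg fun a _ => hv (a, y)
    _ = condEntropy u + condEntropy v + mixEntropy (∑ x, u x) (∑ x, v x) := by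
        rw [Fintype.sum_prod_type_right u, Fintype.sum_prod_type_right v]

theorem condEntropy_sub_le_of_add_eq_add {p q r s : A × Y → ℝ} (hp : ∀ x, 0 ≤ p x)
    (hq : ∀ x, 0 ≤ q x) (hr : ∀ x, 0 ≤ r x) (hs : ∀ x, 0 ≤ s x) (hqsum : ∑ x, q x = 1)
    {ε : ℝ} (hrsum : ∑ x, r x = ε) (h : p + s = q + r) :
    condEntropy p - condEntropy q ≤ ε * Real.log (Fintype.card A) + mixEntropy 1 ε := by
  rw [sub_le_iff_le_add']
  calc condEntropy p ≤ condEntropy p + condEntropy s :=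
        le_add_of_nonneg_right (condEntropy_nonneg hs)
    _ ≤ condEntropy (p + s) := condEntropy_add_condEntropy_le hp hs
    _ = condEntropy (q + r) := by rw [h]
    _ ≤ condEntropy q + condEntropy r + mixEntropy (∑ x, q x) (∑ x, r x) :=
        condEntropy_add_le hq hr
    _ ≤ condEntropy q + (ε * Real.log (Fintype.card A) + mixEntropy 1 ε) := by
        rw [hqsum, hrsum, add_assoc]
        gcongr
        exact hrsum ▸ condEntropy_le_mul_log_card hr

theorem abs_condEntropy_sub_le {p q r s : A × Y → ℝ} (hp : ∀ x, 0 ≤ p x) (hpsum : ∑ x, p x = 1)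
    (hq : ∀ x, 0 ≤ q x) (hqsum : ∑ x, q x = 1) (hr : ∀ x, 0 ≤ r x) (hs : ∀ x, 0 ≤ s x)
    {ε : ℝ} (hrsum : ∑ x, r x = ε) (hssum : ∑ x, s x = ε) (h : p + s = q + r) :
    |condEntropy p - condEntropy q| ≤
      ε * Real.log (Fintype.card A) + (1 + ε) * binEntropy (ε / (1 + ε)) := by
  have hε : 0 ≤ ε := hrsum ▸ sum_nonneg fun x _ => hr x
  rw [← mixEntropy_eq_mul_binEntropy (a := 1) (by linarith), abs_sub_le_iff]
  exact ⟨condEntropy_sub_le_of_add_eq_add hp hq hr hs hqsum hrsum h,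
    condEntropy_sub_le_of_add_eq_add hq hp hs hr hpsum hssum h.symm⟩

end condEntropy

section tvDist

variable {S : Type*} [Fintype S]

lemma tvDist_comm (p q : S → ℝ) : tvDist p q = tvDist q p := by
  simp only [tvDist, abs_sub_comm]

lemma sum_max_sub_eq_tvDist {p q : S → ℝ} (h : ∑ x, p x = ∑ x, q x) :
    ∑ x, max (p x - q x) 0 = tvDist p q := by
  have hmax : ∀ x, max (p x - q x) 0 = ((p x - q x) + |p x - q x|) / 2 := fun x => by
    rcases le_total (p x - q x) 0 with h | h
    · rw [max_eq_right h, abs_of_nonpos h]; ring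
    · rw [max_eq_left h, abs_of_nonneg h]; ring
  simp only [hmax, ← sum_div, sum_add_distrib, sum_sub_distrib, h, tvDist]
  ring

theorem exists_add_eq_add_of_tvDist_le {p q : S → ℝ} (hp : ∀ x, 0 ≤ p x) (hpsum : ∑ x, p x = 1)
    (hqsum : ∑ x, q x = 1) {ε : ℝ} (htv : tvDist p q ≤ ε) :
    ∃ r s : S → ℝ, (∀ x, 0 ≤ r x) ∧ (∀ x, 0 ≤ s x) ∧ ∑ x, r x = ε ∧ ∑ x, s x = ε ∧
      p + s = q + r := by
  have hpad : ∀ x, 0 ≤ (ε - tvDist p q) * p x := fun x => mul_nonneg (sub_nonneg.2 htv) (hp x)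
  refine ⟨fun x => max (p x - q x) 0 + (ε - tvDist p q) * p x,
    fun x => max (q x - p x) 0 + (ε - tvDist p q) * p x,
    fun x => add_nonneg (le_max_right _ _) (hpad x), fun x => add_nonneg (le_max_right _ _) (hpad x),
    ?_, ?_, ?_⟩
  · rw [sum_add_distrib, sum_max_sub_eq_tvDist (hpsum.trans hqsum.symm), ← mul_sum, hpsum]
    ring
  · rw [sum_add_distrib, sum_max_sub_eq_tvDist (hqsum.trans hpsum.symm), tvDist_comm, ← mul_sum,
      hpsum]
    ring
  · funext x
    simp only [Pi.add_apply]
    rcases le_total (p x) (q x) with h | h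
    · rw [max_eq_left (sub_nonneg.2 h), max_eq_right (sub_nonpos.2 h)]; ring
    · rw [max_eq_right (sub_nonpos.2 h), max_eq_left (sub_nonneg.2 h)]; ring

end tvDist

section marginalAC

variable {A B C : Type*} [Fintype B]

noncomputable def marginalAC (r : A × B × C → ℝ) : A × C → ℝ :=
  fun ac => ∑ b, r (ac.1, b, ac.2)

lemma marginalAC_nonneg {r : A × B × C → ℝ} (hr : ∀ x, 0 ≤ r x) (ac : A × C) :
    0 ≤ marginalAC r ac :=
  sum_nonneg fun _ _ => hr _

lemma marginalAC_add (r s : A × B × C → ℝ) :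
    marginalAC (r + s) = marginalAC r + marginalAC s :=
  funext fun _ => sum_add_distrib

lemma sum_marginalAC [Fintype A] [Fintype C] (r : A × B × C → ℝ) :
    ∑ ac, marginalAC r ac = ∑ x, r x := by
  simp only [marginalAC, Fintype.sum_prod_type]
  exact sum_congr rfl fun _ _ => sum_comm

lemma cmi_eq_sub [Fintype A] [Fintype C] (p : A × B × C → ℝ) :
    cmi p = condEntropy (marginalAC p) - condEntropy p :=
  rfl

end marginalAC

theorem cmi_continuity_bound_general
    {A B C : Type*} [Fintype A] [Fintype B] [Fintype C]
    (hA : Fintype.card A = 2)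
    (p q : A × B × C → ℝ)
    (hp : ∀ x, 0 ≤ p x) (hpsum : ∑ x, p x = 1)
    (hq : ∀ x, 0 ≤ q x) (hqsum : ∑ x, q x = 1)
    (δ₀ : ℝ) (htv : tvDist p q ≤ δ₀) :
    |cmi p - cmi q| ≤
      2 * δ₀ * Real.log 2 + 2 * (1 + δ₀) * binEntropy (δ₀ / (1 + δ₀)) := by
  obtain ⟨r, s, hr, hs, hrsum, hssum, hpsqr⟩ := exists_add_eq_add_of_tvDist_le hp hpsum hqsum htv
  have hAC := abs_condEntropy_sub_le (marginalAC_nonneg hp) ((sum_marginalAC p).trans hpsum)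
    (marginalAC_nonneg hq) ((sum_marginalAC q).trans hqsum) (marginalAC_nonneg hr)
    (marginalAC_nonneg hs) ((sum_marginalAC r).trans hrsum) ((sum_marginalAC s).trans hssum)
    (by rw [← marginalAC_add, hpsqr, marginalAC_add])
  have hABC := abs_condEntropy_sub_le hp hpsum hq hqsum hr hs hrsum hssum hpsqr
  rw [hA, Nat.cast_ofNat] at hAC hABC
  rw [cmi_eq_sub, cmi_eq_sub]
  calc _ = |(condEntropy (marginalAC p) - condEntropy (marginalAC q)) -
        (condEntropy p - condEntropy q)| := by ring_nf
    _ ≤ _ := abs_sub _ _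
    _ ≤ _ := add_le_add hAC hABC
    _ = _ := by ring

/-- **Deterministic CMI continuity bound.**  Let `A` be binary and `p, q`
pmfs on `A × B × C` with `δ(p,q) ≤ δ₀` for some `δ₀ ∈ [0,1]`.  Then
`|I_p(A;B|C) − I_q(A;B|C)| ≤ 2 δ₀ log 2 + 2 (1+δ₀) h_b(δ₀/(1+δ₀))`. -/
theorem cmi_continuity_bound
    {A B C : Type*} [Fintype A] [Fintype B] [Fintype C]
    (hA : Fintype.card A = 2)
    (p q : A × B × C → ℝ)
    (hp : ∀ x, 0 ≤ p x) (hpsum : ∑ x, p x = 1)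
    (hq : ∀ x, 0 ≤ q x) (hqsum : ∑ x, q x = 1)
    (δ₀ : ℝ) (hδ₀ : 0 ≤ δ₀ ∧ δ₀ ≤ 1) (htv : tvDist p q ≤ δ₀) :
    |cmi p - cmi q| ≤
      2 * δ₀ * Real.log 2 + 2 * (1 + δ₀) * binEntropy (δ₀ / (1 + δ₀)) :=
  cmi_continuity_bound_general hA p q hp hpsum hq hqsum δ₀ htv
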